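/- (Objective function as a lower bound, Theorem 4.3.) Let K, X, Y, U, B, Z be nonempty finite types. Let P be a pmf on K × X × Y with marginals p_{XY} on X × Y, p_{KX} on K × X, p_X, p_Y, p_K. Let p_L be a strictly positive pmf on U × B × Z, a a kernel from U × B × Z to X with a(x|u,β,z) > 0 everywhere, c a kernel from Z to Y with c(y|z) > 0 everywhere, q a kernel from X to U × B × Z with Z-marginal q_z(z|x) = ∑_{u,β} q(u,β,z|x), and f : K → B a function. Define ELBO(x,y) = ∑_{u,β,z} q(u,β,z|x)·( log( p_L(u,β,z)·a(x|u,β,z)·c(y|z) ) − log q(u,β,z|x) ); the pmf r on X × Y × Z by r(x,y,z) = p_{XY}(x,y)·q_z(z|x) with (Y,Z)-marginal r_{YZ}; the pmf s on X × (U × B × Z) by s(x,u,β,z) = p_X(x)·q(u,β,z|x); and the pmf t on K × X × B × Z by t(k,x,β,z) = p_{KX}(k,x)·q_z(z|x) if β = f(k) and 0 otherwise, with (K,Z)-marginal t_{KZ}. Then ∑_{x,y} p_{XY}(x,y)·ELBO(x,y) − sup_D ∑_{k,z} t_{KZ}(k,z) log D(k|z) ≤ I_{r_{YZ}}(Y;Z)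 + I_s(X;(U,B,Z)) − I_t(Z;B) − I_t(Z;K|B) − ( H(p_Y) + H(p_X) − H(p_K) ), where the supremum is over all kernels D from Z to K with D(k|z) > 0 whenever t_{KZ}(k,z) > 0. -/
import Mathlib

lemma sc3 {A B C M : Type*} [Fintype A] [Fintype B] [Fintype C] [AddCommMonoid M]
    (f : A → B → C → M) :
    ∑ a, ∑ b, ∑ c, f a b c = ∑ c, ∑ a, ∑ b, f a b c :=
  calc ∑ a, ∑ b, ∑ c, f a b c
      = ∑ a, ∑ c, ∑ b, f a b c := Finset.sum_congr rfl fun a _ => Finset.sum_comm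
    _ = ∑ c, ∑ a, ∑ b, f a b c := Finset.sum_comm

lemma sc4 {A B C D M : Type*} [Fintype A] [Fintype B] [Fintype C] [Fintype D] [AddCommMonoid M]
    (f : A → B → C → D → M) :
    ∑ a, ∑ b, ∑ c, ∑ d, f a b c d = ∑ b, ∑ c, ∑ d, ∑ a, f a b c d :=
  calc ∑ a, ∑ b, ∑ c, ∑ d, f a b c d
      = ∑ b, ∑ a, ∑ c, ∑ d, f a b c d := Finset.sum_comm
    _ = ∑ b, ∑ c, ∑ d, ∑ a, f a b c d :=
        Finset.sum_congr rfl fun b _ => (sc3 (fun c d a => f a b c d)).symm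

lemma sum_mul2 {A B : Type*} [Fintype A] [Fintype B] (f : A → B → ℝ) (r : ℝ) :
    ∑ a, ∑ b, f a b * r = (∑ a, ∑ b, f a b) * r := by
  rw [Finset.sum_mul]
  exact Finset.sum_congr rfl fun a _ => (Finset.sum_mul _ _ _).symm

lemma sum_mul3 {A B C : Type*} [Fintype A] [Fintype B] [Fintype C] (f : A → B → C → ℝ) (r : ℝ) :
    ∑ a, ∑ b, ∑ c, f a b c * r = (∑ a, ∑ b, ∑ c, f a b c) * r := by
  rw [Finset.sum_mul]
  exact Finset.sum_congr rfl fun a _ => sum_mul2 _ _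

lemma gibbs_aux {ι : Type*} [Fintype ι] (w v : ι → ℝ)
    (hw0 : ∀ i, 0 ≤ w i) (hv0 : ∀ i, 0 ≤ v i)
    (hwv : ∀ i, 0 < w i → 0 < v i)
    (hw1 : ∑ i, w i = 1) (hv1 : ∑ i, v i ≤ 1) :
    ∑ i, w i * Real.log (v i / w i) ≤ 0 := by
  have key : ∀ i, w i * Real.log (v i / w i) ≤ v i - w i := by
    intro i
    rcases eq_or_lt_of_le (hw0 i) with h | h
    · simp [← h, hv0 i]
    · have hv := hwv i h
      have hd : 0 < v i / w i := div_pos hv h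
      have hlog := Real.log_le_sub_one_of_pos hd
      calc w i * Real.log (v i / w i) ≤ w i * (v i / w i - 1) :=
            mul_le_mul_of_nonneg_left hlog (le_of_lt h)
        _ = v i - w i := by field_simp
  calc ∑ i, w i * Real.log (v i / w i) ≤ ∑ i, (v i - w i) :=
        Finset.sum_le_sum (fun i _ => key i)
    _ = (∑ i, v i) - 1 := by rw [Finset.sum_sub_distrib, hw1]
    _ ≤ 0 := by linarith

lemma gibbs2 {Y Z : Type*} [Fintype Y] [Fintype Z] (w v : Y → Z → ℝ)
    (hw0 : ∀ y z, 0 ≤ w y z) (hv0 : ∀ y z, 0 ≤ v y z)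
    (hwv : ∀ y z, 0 < w y z → 0 < v y z)
    (hw1 : ∑ y, ∑ z, w y z = 1) (hv1 : ∑ y, ∑ z, v y z ≤ 1) :
    ∑ y, ∑ z, w y z * Real.log (v y z / w y z) ≤ 0 := by
  have := gibbs_aux (ι := Y × Z) (fun p => w p.1 p.2) (fun p => v p.1 p.2)
    (fun p => hw0 p.1 p.2) (fun p => hv0 p.1 p.2) (fun p => hwv p.1 p.2)
    (by simpa [Fintype.sum_prod_type] using hw1)
    (by simpa [Fintype.sum_prod_type] using hv1)
  simpa [Fintype.sum_prod_type] using this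

lemma gibbs4 {X U B Z : Type*} [Fintype X] [Fintype U] [Fintype B] [Fintype Z]
    (w v : X → U → B → Z → ℝ)
    (hw0 : ∀ x u β z, 0 ≤ w x u β z) (hv0 : ∀ x u β z, 0 ≤ v x u β z)
    (hwv : ∀ x u β z, 0 < w x u β z → 0 < v x u β z)
    (hw1 : ∑ x, ∑ u, ∑ β, ∑ z, w x u β z = 1)
    (hv1 : ∑ x, ∑ u, ∑ β, ∑ z, v x u β z ≤ 1) :
    ∑ x, ∑ u, ∑ β, ∑ z, w x u β z * Real.log (v x u β z / w x u β z) ≤ 0 := by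
  have := gibbs_aux (ι := X × U × B × Z)
    (fun p => w p.1 p.2.1 p.2.2.1 p.2.2.2) (fun p => v p.1 p.2.1 p.2.2.1 p.2.2.2)
    (fun p => hw0 _ _ _ _) (fun p => hv0 _ _ _ _) (fun p => hwv _ _ _ _)
    (by simpa [Fintype.sum_prod_type] using hw1)
    (by simpa [Fintype.sum_prod_type] using hv1)
  simpa [Fintype.sum_prod_type] using this


/-- Mutual information `I_t(Z;B)` between the encoding `Z` and the domain index `B`,
computed from the corresponding marginals of a joint `t` on `K × X × B × Z`. -/
noncomputable def IZB {K X B Z : Type*} [Fintype K] [Fintype X] [Fintype B] [Fintype Z]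
    (t : K → X → B → Z → ℝ) : ℝ :=
  ∑ β, ∑ z, (∑ k, ∑ x, t k x β z) *
    Real.log ((∑ k, ∑ x, t k x β z) /
      ((∑ k, ∑ x, ∑ z', t k x β z') * (∑ k, ∑ x, ∑ β', t k x β' z)))

/-- Conditional mutual information `I_t(Z;K|B)`, computed from the corresponding
marginals of a joint `t` on `K × X × B × Z`. -/
noncomputable def IZKgB {K X B Z : Type*} [Fintype K] [Fintype X] [Fintype B] [Fintype Z]
    (t : K → X → B → Z → ℝ) : ℝ :=
  ∑ k, ∑ β, ∑ z, (∑ x, t k x β z) *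
    Real.log (((∑ x, t k x β z) * (∑ k', ∑ x, ∑ z', t k' x β z')) /
      ((∑ k', ∑ x, t k' x β z) * (∑ x, ∑ z', t k x β z')))

/-- **Objective function as a lower bound (Theorem 4.3).**
The expected ELBO minus the optimal (supremal) adversarial discriminator
log-likelihood is at most
`I_{r_YZ}(Y;Z) + I_s(X;(U,B,Z)) - I_t(Z;B) - I_t(Z;K|B) - (H(p_Y) + H(p_X) - H(p_K))`. -/
theorem vdi_objective_lower_bound {K X Y U B Z : Type*}
    [Fintype K] [Fintype X] [Fintype Y] [Fintype U] [Fintype B] [Fintype Z]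
    [DecidableEq B]
    [Nonempty K] [Nonempty X] [Nonempty Y] [Nonempty U] [Nonempty B] [Nonempty Z]
    (P : K → X → Y → ℝ) (hP0 : ∀ k x y, 0 ≤ P k x y)
    (hP1 : ∑ k, ∑ x, ∑ y, P k x y = 1)
    (pXY : X → Y → ℝ) (hpXY : ∀ x y, pXY x y = ∑ k, P k x y)
    (pKX : K → X → ℝ) (hpKX : ∀ k x, pKX k x = ∑ y, P k x y)
    (pX : X → ℝ) (hpX : ∀ x, pX x = ∑ k, ∑ y, P k x y)
    (pY : Y → ℝ) (hpY : ∀ y, pY y = ∑ k, ∑ x, P k x y)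
    (pK : K → ℝ) (hpK : ∀ k, pK k = ∑ x, ∑ y, P k x y)
    (pL : U → B → Z → ℝ) (hpL0 : ∀ u β z, 0 < pL u β z)
    (hpL1 : ∑ u, ∑ β, ∑ z, pL u β z = 1)
    (a : U → B → Z → X → ℝ) (ha0 : ∀ u β z x, 0 < a u β z x)
    (ha1 : ∀ u β z, ∑ x, a u β z x = 1)
    (c : Z → Y → ℝ) (hc0 : ∀ z y, 0 < c z y) (hc1 : ∀ z, ∑ y, c z y = 1)
    (q : X → U → B → Z → ℝ) (hq0 : ∀ x u β z, 0 ≤ q x u β z)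
    (hq1 : ∀ x, ∑ u, ∑ β, ∑ z, q x u β z = 1)
    (qz : X → Z → ℝ) (hqz : ∀ x z, qz x z = ∑ u, ∑ β, q x u β z)
    (f : K → B)
    (ELBO : X → Y → ℝ)
    (hELBO : ∀ x y, ELBO x y = ∑ u, ∑ β, ∑ z, q x u β z *
        (Real.log (pL u β z * a u β z x * c z y) - Real.log (q x u β z)))
    (rYZ : Y → Z → ℝ) (hrYZ : ∀ y z, rYZ y z = ∑ x, pXY x y * qz x z)
    (s : X → U → B → Z → ℝ) (hs : ∀ x u β z, s x u β z = pX x * q x u β z)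
    (t : K → X → B → Z → ℝ)
    (ht : ∀ k x β z, t k x β z = if β = f k then pKX k x * qz x z else 0)
    (tKZ : K → Z → ℝ) (htKZ : ∀ k z, tKZ k z = ∑ x, ∑ β, t k x β z) :
    (∑ x, ∑ y, pXY x y * ELBO x y)
      - sSup {v : ℝ | ∃ D : Z → K → ℝ, (∀ z k, 0 ≤ D z k) ∧ (∀ z, ∑ k, D z k = 1) ∧
          (∀ k z, 0 < tKZ k z → 0 < D z k) ∧
          v = ∑ k, ∑ z, tKZ k z * Real.log (D z k)}
      ≤ (∑ y, ∑ z, rYZ y z *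
            Real.log (rYZ y z / ((∑ z', rYZ y z') * (∑ y', rYZ y' z))))
        + (∑ x, ∑ u, ∑ β, ∑ z, s x u β z *
            Real.log (s x u β z /
              ((∑ u', ∑ β', ∑ z', s x u' β' z') * (∑ x', s x' u β z))))
        - IZB t - IZKgB t
        - ((-∑ y, pY y * Real.log (pY y)) + (-∑ x, pX x * Real.log (pX x))
            - (-∑ k, pK k * Real.log (pK k))) := by
  classical
  -- ===== basic nonnegativity and marginal facts =====
  have hpXY0 : ∀ x y, 0 ≤ pXY x y := fun x y => by
    rw [hpXY]; exact Finset.sum_nonneg fun k _ => hP0 k x y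
  have hpKX0 : ∀ k x, 0 ≤ pKX k x := fun k x => by
    rw [hpKX]; exact Finset.sum_nonneg fun y _ => hP0 k x y
  have hpX0 : ∀ x, 0 ≤ pX x := fun x => by
    rw [hpX]; exact Finset.sum_nonneg fun k _ => Finset.sum_nonneg fun y _ => hP0 k x y
  have hqz0 : ∀ x z, 0 ≤ qz x z := fun x z => by
    rw [hqz]; exact Finset.sum_nonneg fun u _ => Finset.sum_nonneg fun β _ => hq0 x u β z
  have hs0 : ∀ x u β z, 0 ≤ s x u β z := fun x u β z => by
    rw [hs]; exact mul_nonneg (hpX0 x) (hq0 x u β z)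
  have hrYZ0 : ∀ y z, 0 ≤ rYZ y z := fun y z => by
    rw [hrYZ]; exact Finset.sum_nonneg fun x _ => mul_nonneg (hpXY0 x y) (hqz0 x z)
  have hqz1 : ∀ x, ∑ z, qz x z = 1 := fun x => by
    have : ∑ z, qz x z = ∑ z, ∑ u, ∑ β, q x u β z :=
      Finset.sum_congr rfl fun z _ => hqz x z
    rw [this, ← sc3 (fun u β z => q x u β z), hq1]
  have hpXYx : ∀ x, ∑ y, pXY x y = pX x := fun x => by
    rw [hpX]
    have : ∑ y, pXY x y = ∑ y, ∑ k, P k x y := Finset.sum_congr rfl fun y _ => hpXY x y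
    rw [this, Finset.sum_comm]
  have hpXYy : ∀ y, ∑ x, pXY x y = pY y := fun y => by
    rw [hpY]
    have : ∑ x, pXY x y = ∑ x, ∑ k, P k x y := Finset.sum_congr rfl fun x _ => hpXY x y
    rw [this, Finset.sum_comm]
  have hpKXx : ∀ k, ∑ x, pKX k x = pK k := fun k => by
    rw [hpK]; exact Finset.sum_congr rfl fun x _ => hpKX k x
  have hpX1 : ∑ x, pX x = 1 := by
    rw [← hP1]
    have : ∑ x, pX x = ∑ x, ∑ k, ∑ y, P k x y := Finset.sum_congr rfl fun x _ => hpX x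
    rw [this, Finset.sum_comm]
  have hpY1 : ∑ y, pY y = 1 := by
    rw [← hP1]
    have : ∑ y, pY y = ∑ y, ∑ k, ∑ x, P k x y := Finset.sum_congr rfl fun y _ => hpY y
    rw [this, ← sc3 (fun k x y => P k x y)]
  -- ===== facts about t =====
  have htKZ' : ∀ k z, tKZ k z = ∑ x, pKX k x * qz x z := by
    intro k z
    rw [htKZ]
    refine Finset.sum_congr rfl fun x _ => ?_
    have : ∀ β, t k x β z = if β = f k then pKX k x * qz x z else 0 := fun β => ht k x β z
    simp [this]
  have htKZ0 : ∀ k z, 0 ≤ tKZ k z := fun k z => by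
    rw [htKZ' k z]; exact Finset.sum_nonneg fun x _ => mul_nonneg (hpKX0 k x) (hqz0 x z)
  have htKZsum : ∀ k, ∑ z, tKZ k z = pK k := by
    intro k
    have h1 : ∑ z, tKZ k z = ∑ z, ∑ x, pKX k x * qz x z :=
      Finset.sum_congr rfl fun z _ => htKZ' k z
    rw [h1, Finset.sum_comm]
    have h2 : ∀ x, ∑ z, pKX k x * qz x z = pKX k x := fun x => by
      rw [← Finset.mul_sum, hqz1, mul_one]
    rw [Finset.sum_congr rfl fun x _ => h2 x, hpKXx]
  -- marginals of t
  have hT4 : ∀ k β z, (∑ x, t k x β z) = if β = f k then tKZ k z else 0 := by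
    intro k β z
    by_cases hβ : β = f k
    · subst hβ
      simp only [ht, if_pos rfl]
      exact (htKZ' k z).symm
    · simp only [ht, if_neg hβ, Finset.sum_const_zero]
  have hT1 : ∀ β z, (∑ k, ∑ x, t k x β z) = ∑ k, if β = f k then tKZ k z else 0 :=
    fun β z => Finset.sum_congr rfl fun k _ => hT4 k β z
  have hT5 : ∀ k β, (∑ x, ∑ z', t k x β z') = if β = f k then pK k else 0 := by
    intro k β
    rw [Finset.sum_comm]
    have : ∀ z', (∑ x, t k x β z') = if β = f k then tKZ k z' else 0 := fun z' => hT4 k β z'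
    rw [Finset.sum_congr rfl fun z' _ => this z']
    by_cases hβ : β = f k
    · simp only [if_pos hβ, htKZsum]
    · simp only [if_neg hβ, Finset.sum_const_zero]
  have hT2 : ∀ β, (∑ k, ∑ x, ∑ z', t k x β z') = ∑ k, if β = f k then pK k else 0 :=
    fun β => Finset.sum_congr rfl fun k _ => hT5 k β
  have hT3 : ∀ z, (∑ k, ∑ x, ∑ β', t k x β' z) = ∑ k, tKZ k z :=
    fun z => Finset.sum_congr rfl fun k _ => (htKZ k z).symm
  -- ===== Step B : IZB + IZKgB + sum pK log pK = optimal discriminator value =====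
  have hIZB : IZB t = ∑ k, ∑ z, tKZ k z *
      Real.log ((∑ k', if f k = f k' then tKZ k' z else 0) /
        ((∑ k', if f k = f k' then pK k' else 0) * (∑ k', tKZ k' z))) := by
    rw [IZB]
    have step1 : ∀ β z, (∑ k, ∑ x, t k x β z) *
        Real.log ((∑ k, ∑ x, t k x β z) /
          ((∑ k, ∑ x, ∑ z', t k x β z') * (∑ k, ∑ x, ∑ β', t k x β' z)))
        = ∑ k, (if β = f k then tKZ k z else 0) *
            Real.log ((∑ k', if β = f k' then tKZ k' z else 0) /
              ((∑ k', if β = f k' then pK k' else 0) * (∑ k', tKZ k' z))) := by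
      intro β z
      rw [hT1, hT2, hT3, Finset.sum_mul]
    calc ∑ β, ∑ z, (∑ k, ∑ x, t k x β z) *
        Real.log ((∑ k, ∑ x, t k x β z) /
          ((∑ k, ∑ x, ∑ z', t k x β z') * (∑ k, ∑ x, ∑ β', t k x β' z)))
        = ∑ β, ∑ z, ∑ k, (if β = f k then tKZ k z else 0) *
            Real.log ((∑ k', if β = f k' then tKZ k' z else 0) /
              ((∑ k', if β = f k' then pK k' else 0) * (∑ k', tKZ k' z))) := by
          exact Finset.sum_congr rfl fun β _ => Finset.sum_congr rfl fun z _ => step1 β z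
      _ = ∑ k, ∑ β, ∑ z, (if β = f k then tKZ k z else 0) *
            Real.log ((∑ k', if β = f k' then tKZ k' z else 0) /
              ((∑ k', if β = f k' then pK k' else 0) * (∑ k', tKZ k' z))) := by
          rw [sc3]
      _ = ∑ k, ∑ z, tKZ k z *
            Real.log ((∑ k', if f k = f k' then tKZ k' z else 0) /
              ((∑ k', if f k = f k' then pK k' else 0) * (∑ k', tKZ k' z))) := by
          refine Finset.sum_congr rfl fun k _ => ?_
          rw [Finset.sum_comm]
          refine Finset.sum_congr rfl fun z _ => ?_
          rw [Finset.sum_eq_single (f k)]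
          · simp
          · intro β _ hβ
            rw [if_neg (by exact fun h => hβ h), zero_mul]
          · intro h; exact absurd (Finset.mem_univ _) h
  have hIZKgB : IZKgB t = ∑ k, ∑ z, tKZ k z *
      Real.log ((tKZ k z * (∑ k', if f k = f k' then pK k' else 0)) /
        ((∑ k', if f k = f k' then tKZ k' z else 0) * pK k)) := by
    rw [IZKgB]
    refine Finset.sum_congr rfl fun k _ => ?_
    rw [Finset.sum_comm]
    refine Finset.sum_congr rfl fun z _ => ?_
    rw [Finset.sum_eq_single (f k)]
    · rw [hT4, hT1, hT5]
      have h2 : (∑ k', ∑ x, ∑ z', t k' x (f k) z') = ∑ k', if f k = f k' then pK k' else 0 := by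
        rw [hT2]
      rw [h2]
      simp
    · intro β _ hβ
      rw [hT4, if_neg hβ, zero_mul]
    · intro h; exact absurd (Finset.mem_univ _) h
  have hSK : ∑ k, pK k * Real.log (pK k) = ∑ k, ∑ z, tKZ k z * Real.log (pK k) := by
    refine Finset.sum_congr rfl fun k _ => ?_
    rw [← htKZsum k, Finset.sum_mul]
  have hB : IZB t + IZKgB t + ∑ k, pK k * Real.log (pK k)
      = ∑ k, ∑ z, tKZ k z * Real.log (tKZ k z / ∑ k', tKZ k' z) := by
    rw [hIZB, hIZKgB, hSK, ← Finset.sum_add_distrib, ← Finset.sum_add_distrib]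
    refine Finset.sum_congr rfl fun k _ => ?_
    rw [← Finset.sum_add_distrib, ← Finset.sum_add_distrib]
    refine Finset.sum_congr rfl fun z _ => ?_
    rcases eq_or_lt_of_le (htKZ0 k z) with h0 | h0
    · rw [← h0]; ring_nf
    · have hpKpos : 0 < pK k := by
        rw [← htKZsum k]
        exact lt_of_lt_of_le h0 (Finset.single_le_sum (fun z' _ => htKZ0 k z') (Finset.mem_univ z))
      have hTBZ : 0 < ∑ k', if f k = f k' then tKZ k' z else 0 := by
        refine Finset.sum_pos' (fun k' _ => ?_) ⟨k, Finset.mem_univ k, ?_⟩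
        · split_ifs
          · exact htKZ0 k' z
          · exact le_rfl
        · rw [if_pos rfl]; exact h0
      have hTB : 0 < ∑ k', if f k = f k' then pK k' else 0 := by
        refine Finset.sum_pos' (fun k' _ => ?_) ⟨k, Finset.mem_univ k, ?_⟩
        · split_ifs with h
          · rw [← htKZsum k']
            exact Finset.sum_nonneg fun z' _ => htKZ0 k' z'
          · exact le_refl 0
        · rw [if_pos rfl]; exact hpKpos
      have htZ : 0 < ∑ k', tKZ k' z :=
        lt_of_lt_of_le h0 (Finset.single_le_sum (fun k' _ => htKZ0 k' z) (Finset.mem_univ k))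
      rw [Real.log_div (ne_of_gt hTBZ) (ne_of_gt (mul_pos hTB htZ)),
        Real.log_mul (ne_of_gt hTB) (ne_of_gt htZ),
        Real.log_div (ne_of_gt (mul_pos h0 hTB)) (ne_of_gt (mul_pos hTBZ hpKpos)),
        Real.log_mul (ne_of_gt h0) (ne_of_gt hTB),
        Real.log_mul (ne_of_gt hTBZ) (ne_of_gt hpKpos),
        Real.log_div (ne_of_gt h0) (ne_of_gt htZ)]
      ring
  -- ===== Step A : the optimal discriminator value is attained in the set =====
  have hA : (∑ k, ∑ z, tKZ k z * Real.log (tKZ k z / ∑ k', tKZ k' z))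
      ≤ sSup {v : ℝ | ∃ D : Z → K → ℝ, (∀ z k, 0 ≤ D z k) ∧ (∀ z, ∑ k, D z k = 1) ∧
          (∀ k z, 0 < tKZ k z → 0 < D z k) ∧
          v = ∑ k, ∑ z, tKZ k z * Real.log (D z k)} := by
    have hbdd : BddAbove {v : ℝ | ∃ D : Z → K → ℝ, (∀ z k, 0 ≤ D z k) ∧ (∀ z, ∑ k, D z k = 1) ∧
          (∀ k z, 0 < tKZ k z → 0 < D z k) ∧
          v = ∑ k, ∑ z, tKZ k z * Real.log (D z k)} := by
      refine ⟨0, ?_⟩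
      rintro v ⟨D, hD0, hD1, hDpos, rfl⟩
      refine Finset.sum_nonpos fun k _ => Finset.sum_nonpos fun z _ => ?_
      have hD1' : D z k ≤ 1 := by
        rw [← hD1 z]
        exact Finset.single_le_sum (fun k' _ => hD0 z k') (Finset.mem_univ k)
      exact mul_nonpos_iff.mpr (Or.inl ⟨htKZ0 k z, Real.log_nonpos (hD0 z k) hD1'⟩)
    refine le_csSup hbdd ?_
    refine ⟨fun z k => if 0 < ∑ k', tKZ k' z then tKZ k z / (∑ k', tKZ k' z)
      else (Fintype.card K : ℝ)⁻¹, ?_, ?_, ?_, ?_⟩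
    · intro z k
      dsimp only
      split_ifs with h
      · exact div_nonneg (htKZ0 k z) (le_of_lt h)
      · positivity
    · intro z
      dsimp only
      split_ifs with h
      · rw [← Finset.sum_div, div_self (ne_of_gt h)]
      · rw [Finset.sum_const, Finset.card_univ, nsmul_eq_mul, mul_inv_cancel₀]
        exact Nat.cast_ne_zero.mpr Fintype.card_ne_zero
    · intro k z hpos
      have htZ : 0 < ∑ k', tKZ k' z :=
        lt_of_lt_of_le hpos (Finset.single_le_sum (fun k' _ => htKZ0 k' z) (Finset.mem_univ k))
      dsimp only
      rw [if_pos htZ]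
      exact div_pos hpos htZ
    · refine Finset.sum_congr rfl fun k _ => Finset.sum_congr rfl fun z _ => ?_
      dsimp only
      by_cases h : 0 < ∑ k', tKZ k' z
      · rw [if_pos h]
      · have htz0 : ∑ k', tKZ k' z = 0 :=
          le_antisymm (not_lt.mp h) (Finset.sum_nonneg fun k' _ => htKZ0 k' z)
        have h0 : tKZ k z = 0 :=
          (Finset.sum_eq_zero_iff_of_nonneg (fun k' _ => htKZ0 k' z)).mp htz0 k (Finset.mem_univ k)
        rw [h0, zero_mul, zero_mul]
  -- ===== Step C : expected ELBO bound =====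
  have hsX : ∀ x, (∑ u, ∑ β, ∑ z, s x u β z) = pX x := by
    intro x
    simp only [hs, ← Finset.mul_sum]
    rw [hq1, mul_one]
  have hsTot : ∑ x, ∑ u, ∑ β, ∑ z, s x u β z = 1 := by
    rw [Finset.sum_congr rfl fun x _ => hsX x, hpX1]
  have hrY : ∀ y, (∑ z', rYZ y z') = pY y := by
    intro y
    have h1 : ∑ z', rYZ y z' = ∑ z', ∑ x, pXY x y * qz x z' :=
      Finset.sum_congr rfl fun z' _ => hrYZ y z'
    rw [h1, Finset.sum_comm]
    have h2 : ∀ x, ∑ z', pXY x y * qz x z' = pXY x y := fun x => by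
      rw [← Finset.mul_sum, hqz1, mul_one]
    rw [Finset.sum_congr rfl fun x _ => h2 x, hpXYy]
  have hrTot : ∑ y, ∑ z, rYZ y z = 1 := by
    rw [Finset.sum_congr rfl fun y _ => hrY y, hpY1]
  -- expansion of the ELBO
  have hElx : ∀ x y, ELBO x y =
      (∑ u, ∑ β, ∑ z, q x u β z * Real.log (pL u β z))
      + (∑ u, ∑ β, ∑ z, q x u β z * Real.log (a u β z x))
      + (∑ z, qz x z * Real.log (c z y))
      - (∑ u, ∑ β, ∑ z, q x u β z * Real.log (q x u β z)) := by
    intro x y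
    rw [hELBO]
    have hexp : ∀ u β z, q x u β z * (Real.log (pL u β z * a u β z x * c z y) - Real.log (q x u β z))
        = q x u β z * Real.log (pL u β z) + q x u β z * Real.log (a u β z x)
          + q x u β z * Real.log (c z y) - q x u β z * Real.log (q x u β z) := by
      intro u β z
      rw [Real.log_mul (mul_pos (hpL0 u β z) (ha0 u β z x)).ne' (hc0 z y).ne',
        Real.log_mul (hpL0 u β z).ne' (ha0 u β z x).ne']
      ring
    simp only [hexp, Finset.sum_add_distrib, Finset.sum_sub_distrib]
    have hcc : (∑ u, ∑ β, ∑ z, q x u β z * Real.log (c z y)) = ∑ z, qz x z * Real.log (c z y) := by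
      rw [sc3]
      refine Finset.sum_congr rfl fun z _ => ?_
      rw [hqz, Finset.sum_mul]
      exact Finset.sum_congr rfl fun u _ => (Finset.sum_mul _ _ _).symm
    rw [hcc]
  have hpull : ∀ (x : X) (g : U → B → Z → ℝ),
      pX x * (∑ u, ∑ β, ∑ z, q x u β z * g u β z) = ∑ u, ∑ β, ∑ z, s x u β z * g u β z := by
    intro x g
    simp only [Finset.mul_sum]
    refine Finset.sum_congr rfl fun u _ => Finset.sum_congr rfl fun β _ =>
      Finset.sum_congr rfl fun z _ => ?_
    rw [hs]; ring
  have hyint : ∀ g : X → ℝ, (∑ x, ∑ y, pXY x y * g x) = ∑ x, pX x * g x := by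
    intro g
    exact Finset.sum_congr rfl fun x _ => by rw [← Finset.sum_mul, hpXYx]
  have hE1 : (∑ x, ∑ y, pXY x y * ELBO x y)
      = (∑ x, ∑ u, ∑ β, ∑ z, s x u β z * Real.log (pL u β z))
      + (∑ x, ∑ u, ∑ β, ∑ z, s x u β z * Real.log (a u β z x))
      + (∑ y, ∑ z, rYZ y z * Real.log (c z y))
      - (∑ x, ∑ u, ∑ β, ∑ z, s x u β z * Real.log (q x u β z)) := by
    have hxy : ∀ x y, pXY x y * ELBO x y
        = pXY x y * (∑ u, ∑ β, ∑ z, q x u β z * Real.log (pL u β z))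
        + pXY x y * (∑ u, ∑ β, ∑ z, q x u β z * Real.log (a u β z x))
        + pXY x y * (∑ z, qz x z * Real.log (c z y))
        - pXY x y * (∑ u, ∑ β, ∑ z, q x u β z * Real.log (q x u β z)) := by
      intro x y
      rw [hElx x y]; ring
    simp only [hxy, Finset.sum_add_distrib, Finset.sum_sub_distrib]
    have e1 : (∑ x, ∑ y, pXY x y * (∑ u, ∑ β, ∑ z, q x u β z * Real.log (pL u β z)))
        = ∑ x, ∑ u, ∑ β, ∑ z, s x u β z * Real.log (pL u β z) := by
      rw [hyint]
      exact Finset.sum_congr rfl fun x _ => hpull x _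
    have e2 : (∑ x, ∑ y, pXY x y * (∑ u, ∑ β, ∑ z, q x u β z * Real.log (a u β z x)))
        = ∑ x, ∑ u, ∑ β, ∑ z, s x u β z * Real.log (a u β z x) := by
      rw [hyint]
      exact Finset.sum_congr rfl fun x _ => hpull x _
    have e4 : (∑ x, ∑ y, pXY x y * (∑ u, ∑ β, ∑ z, q x u β z * Real.log (q x u β z)))
        = ∑ x, ∑ u, ∑ β, ∑ z, s x u β z * Real.log (q x u β z) := by
      rw [hyint]
      exact Finset.sum_congr rfl fun x _ => hpull x _
    have e3 : (∑ x, ∑ y, pXY x y * (∑ z, qz x z * Real.log (c z y)))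
        = ∑ y, ∑ z, rYZ y z * Real.log (c z y) := by
      calc ∑ x, ∑ y, pXY x y * (∑ z, qz x z * Real.log (c z y))
          = ∑ x, ∑ y, ∑ z, pXY x y * qz x z * Real.log (c z y) := by
            refine Finset.sum_congr rfl fun x _ => Finset.sum_congr rfl fun y _ => ?_
            rw [Finset.mul_sum]
            exact Finset.sum_congr rfl fun z _ => by ring
        _ = ∑ y, ∑ z, ∑ x, pXY x y * qz x z * Real.log (c z y) :=
            (sc3 (fun y z x => pXY x y * qz x z * Real.log (c z y))).symm
        _ = ∑ y, ∑ z, rYZ y z * Real.log (c z y) := by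
            refine Finset.sum_congr rfl fun y _ => Finset.sum_congr rfl fun z _ => ?_
            rw [← Finset.sum_mul, ← hrYZ]
    rw [e1, e2, e3, e4]
  -- rewriting I_s
  have hIs : (∑ x, ∑ u, ∑ β, ∑ z, s x u β z *
        Real.log (s x u β z / ((∑ u', ∑ β', ∑ z', s x u' β' z') * (∑ x', s x' u β z))))
      = (∑ x, ∑ u, ∑ β, ∑ z, s x u β z * Real.log (q x u β z))
        - (∑ x, ∑ u, ∑ β, ∑ z, s x u β z * Real.log (∑ x', s x' u β z)) := by
    have key : ∀ x u β z, s x u β z *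
        Real.log (s x u β z / ((∑ u', ∑ β', ∑ z', s x u' β' z') * (∑ x', s x' u β z)))
        = s x u β z * Real.log (q x u β z) - s x u β z * Real.log (∑ x', s x' u β z) := by
      intro x u β z
      rw [hsX x]
      rcases eq_or_lt_of_le (hs0 x u β z) with h0 | h0
      · rw [← h0]; ring
      · have hmul : 0 < pX x * q x u β z := by rw [← hs]; exact h0
        rcases mul_pos_iff.mp hmul with ⟨hpXpos, hqpos⟩ | ⟨h1, _⟩
        · have hm : 0 < ∑ x', s x' u β z :=
            lt_of_lt_of_le h0 (Finset.single_le_sum (fun x' _ => hs0 x' u β z) (Finset.mem_univ x))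
          have hdv : s x u β z / (pX x * (∑ x', s x' u β z))
              = q x u β z / (∑ x', s x' u β z) := by
            rw [hs x u β z, mul_div_mul_left _ _ (ne_of_gt hpXpos)]
          rw [hdv, Real.log_div (ne_of_gt hqpos) (ne_of_gt hm)]
          ring
        · exact absurd h1 (not_lt.mpr (hpX0 x))
    simp only [key, Finset.sum_sub_distrib]
  -- rewriting I_r
  have hIr : (∑ y, ∑ z, rYZ y z *
        Real.log (rYZ y z / ((∑ z', rYZ y z') * (∑ y', rYZ y' z))))
      = (∑ y, ∑ z, rYZ y z * Real.log (rYZ y z))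
        - (∑ y, pY y * Real.log (pY y))
        - (∑ y, ∑ z, rYZ y z * Real.log (∑ y', rYZ y' z)) := by
    have key : ∀ y z, rYZ y z * Real.log (rYZ y z / ((∑ z', rYZ y z') * (∑ y', rYZ y' z)))
        = rYZ y z * Real.log (rYZ y z) - rYZ y z * Real.log (pY y)
          - rYZ y z * Real.log (∑ y', rYZ y' z) := by
      intro y z
      rw [hrY y]
      rcases eq_or_lt_of_le (hrYZ0 y z) with h0 | h0
      · rw [← h0]; ring
      · have hpYpos : 0 < pY y := by
          rw [← hrY y]
          exact lt_of_lt_of_le h0 (Finset.single_le_sum (fun z' _ => hrYZ0 y z') (Finset.mem_univ z))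
        have hmz : 0 < ∑ y', rYZ y' z :=
          lt_of_lt_of_le h0 (Finset.single_le_sum (fun y' _ => hrYZ0 y' z) (Finset.mem_univ y))
        rw [Real.log_div (ne_of_gt h0) (ne_of_gt (mul_pos hpYpos hmz)),
          Real.log_mul (ne_of_gt hpYpos) (ne_of_gt hmz)]
        ring
    simp only [key, Finset.sum_sub_distrib]
    have hmid : (∑ y, ∑ z, rYZ y z * Real.log (pY y)) = ∑ y, pY y * Real.log (pY y) := by
      refine Finset.sum_congr rfl fun y _ => ?_
      rw [← Finset.sum_mul, hrY]
    rw [hmid]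
  -- Gibbs bound 1
  have hG1 : (∑ x, ∑ u, ∑ β, ∑ z, s x u β z * Real.log (pL u β z))
      - (∑ x, ∑ u, ∑ β, ∑ z, s x u β z * Real.log (q x u β z)) ≤ 0 := by
    have hv1 : ∑ x, ∑ u, ∑ β, ∑ z, pX x * pL u β z ≤ 1 := by
      have : ∀ x, ∑ u, ∑ β, ∑ z, pX x * pL u β z = pX x := by
        intro x
        simp only [← Finset.mul_sum]
        rw [hpL1, mul_one]
      rw [Finset.sum_congr rfl fun x _ => this x, hpX1]
    have hgb := gibbs4 s (fun x u β z => pX x * pL u β z) hs0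
      (fun x u β z => mul_nonneg (hpX0 x) (le_of_lt (hpL0 u β z)))
      (fun x u β z hpos => by
        have hmul : 0 < pX x * q x u β z := by rw [← hs]; exact hpos
        rcases mul_pos_iff.mp hmul with ⟨h1, _⟩ | ⟨h1, _⟩
        · exact mul_pos h1 (hpL0 u β z)
        · exact absurd h1 (not_lt.mpr (hpX0 x)))
      hsTot hv1
    have key : ∀ x u β z, s x u β z * Real.log (pX x * pL u β z / s x u β z)
        = s x u β z * Real.log (pL u β z) - s x u β z * Real.log (q x u β z) := by
      intro x u β z
      rcases eq_or_lt_of_le (hs0 x u β z) with h0 | h0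
      · rw [← h0]; ring
      · have hmul : 0 < pX x * q x u β z := by rw [← hs]; exact h0
        rcases mul_pos_iff.mp hmul with ⟨hpXpos, hqpos⟩ | ⟨h1, _⟩
        · have hdv : pX x * pL u β z / s x u β z = pL u β z / q x u β z := by
            rw [hs x u β z, mul_div_mul_left _ _ (ne_of_gt hpXpos)]
          rw [hdv, Real.log_div (ne_of_gt (hpL0 u β z)) (ne_of_gt hqpos)]
          ring
        · exact absurd h1 (not_lt.mpr (hpX0 x))
    simp only [key, Finset.sum_sub_distrib] at hgb
    exact hgb
  -- Gibbs bound 2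
  have hG2 : (∑ x, ∑ u, ∑ β, ∑ z, s x u β z * Real.log (a u β z x))
      + (∑ x, ∑ u, ∑ β, ∑ z, s x u β z * Real.log (∑ x', s x' u β z))
      - (∑ x, ∑ u, ∑ β, ∑ z, s x u β z * Real.log (q x u β z))
      - (∑ x, pX x * Real.log (pX x)) ≤ 0 := by
    have hv1 : ∑ x, ∑ u, ∑ β, ∑ z, a u β z x * (∑ x', s x' u β z) ≤ 1 := by
      rw [sc4 (fun x u β z => a u β z x * (∑ x', s x' u β z))]
      have h1 : ∀ u β z, (∑ x, a u β z x * (∑ x', s x' u β z)) = ∑ x', s x' u β z := by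
        intro u β z
        rw [← Finset.sum_mul, ha1, one_mul]
      rw [Finset.sum_congr rfl fun u _ => Finset.sum_congr rfl fun β _ =>
        Finset.sum_congr rfl fun z _ => h1 u β z]
      rw [← sc4 (fun x u β z => s x u β z), hsTot]
    have hgb := gibbs4 s (fun x u β z => a u β z x * (∑ x', s x' u β z)) hs0
      (fun x u β z => mul_nonneg (le_of_lt (ha0 u β z x))
        (Finset.sum_nonneg fun x' _ => hs0 x' u β z))
      (fun x u β z hpos => mul_pos (ha0 u β z x)
        (lt_of_lt_of_le hpos (Finset.single_le_sum (fun x' _ => hs0 x' u β z) (Finset.mem_univ x))))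
      hsTot hv1
    have key : ∀ x u β z, s x u β z * Real.log (a u β z x * (∑ x', s x' u β z) / s x u β z)
        = s x u β z * Real.log (a u β z x) + s x u β z * Real.log (∑ x', s x' u β z)
          - s x u β z * Real.log (pX x) - s x u β z * Real.log (q x u β z) := by
      intro x u β z
      rcases eq_or_lt_of_le (hs0 x u β z) with h0 | h0
      · rw [← h0]; ring
      · have hmul : 0 < pX x * q x u β z := by rw [← hs]; exact h0
        rcases mul_pos_iff.mp hmul with ⟨hpXpos, hqpos⟩ | ⟨h1, _⟩
        · have hm : 0 < ∑ x', s x' u β z :=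
            lt_of_lt_of_le h0 (Finset.single_le_sum (fun x' _ => hs0 x' u β z) (Finset.mem_univ x))
          rw [hs x u β z,
            Real.log_div (ne_of_gt (mul_pos (ha0 u β z x) hm)) (ne_of_gt hmul),
            Real.log_mul (ne_of_gt (ha0 u β z x)) (ne_of_gt hm),
            Real.log_mul (ne_of_gt hpXpos) (ne_of_gt hqpos)]
          ring
        · exact absurd h1 (not_lt.mpr (hpX0 x))
    simp only [key, Finset.sum_add_distrib, Finset.sum_sub_distrib] at hgb
    have hmid : (∑ x, ∑ u, ∑ β, ∑ z, s x u β z * Real.log (pX x)) = ∑ x, pX x * Real.log (pX x) := by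
      refine Finset.sum_congr rfl fun x _ => ?_
      rw [sum_mul3 (fun u β z => s x u β z) (Real.log (pX x)), hsX]
    rw [hmid] at hgb
    linarith
  -- Gibbs bound 3
  have hG3 : (∑ y, ∑ z, rYZ y z * Real.log (c z y))
      + (∑ y, ∑ z, rYZ y z * Real.log (∑ y', rYZ y' z))
      - (∑ y, ∑ z, rYZ y z * Real.log (rYZ y z)) ≤ 0 := by
    have hv1 : ∑ y, ∑ z, c z y * (∑ y', rYZ y' z) ≤ 1 := by
      rw [Finset.sum_comm]
      have h1 : ∀ z, (∑ y, c z y * (∑ y', rYZ y' z)) = ∑ y', rYZ y' z := by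
        intro z
        rw [← Finset.sum_mul, hc1, one_mul]
      rw [Finset.sum_congr rfl fun z _ => h1 z, Finset.sum_comm, hrTot]
    have hgb := gibbs2 rYZ (fun y z => c z y * (∑ y', rYZ y' z)) hrYZ0
      (fun y z => mul_nonneg (le_of_lt (hc0 z y)) (Finset.sum_nonneg fun y' _ => hrYZ0 y' z))
      (fun y z hpos => mul_pos (hc0 z y)
        (lt_of_lt_of_le hpos (Finset.single_le_sum (fun y' _ => hrYZ0 y' z) (Finset.mem_univ y))))
      hrTot hv1
    have key : ∀ y z, rYZ y z * Real.log (c z y * (∑ y', rYZ y' z) / rYZ y z)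
        = rYZ y z * Real.log (c z y) + rYZ y z * Real.log (∑ y', rYZ y' z)
          - rYZ y z * Real.log (rYZ y z) := by
      intro y z
      rcases eq_or_lt_of_le (hrYZ0 y z) with h0 | h0
      · rw [← h0]; ring
      · have hmz : 0 < ∑ y', rYZ y' z :=
          lt_of_lt_of_le h0 (Finset.single_le_sum (fun y' _ => hrYZ0 y' z) (Finset.mem_univ y))
        rw [Real.log_div (ne_of_gt (mul_pos (hc0 z y) hmz)) (ne_of_gt h0),
          Real.log_mul (ne_of_gt (hc0 z y)) (ne_of_gt hmz)]
        ring
    simp only [key, Finset.sum_add_distrib, Finset.sum_sub_distrib] at hgb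
    linarith
  -- ===== combine everything =====
  linarith [hA, hB, hE1, hIs, hIr, hG1, hG2, hG3]
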